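/- Let L1 and Λ be natural numbers with 3 ≤ L1 < Λ and L1 even. Then the cardinality of the set of sextuples (a,b,c,d,e,f) in S(L1,Λ,Λ) satisfying b ≤ c equals the cardinality of the set of triples (a,b,c) of natural numbers satisfying 2a+1 ≤ L1, 2b+1 ≤ Λ, b ≤ c, 2c+1 ≤ Λ, L1+2c ≥ 2a+2b, L1+2b ≥ 2a+2c, and 2Λ+2a ≥ L1+2b+2c. -/

import Mathlib

/-- The set of adjacency data `(a,b,c,d,e,f)` of connected multigraphs on three
nodes with degrees `L1, L2, L3`. -/
def S (L1 L2 L3 : ℕ) : Set (ℕ × ℕ × ℕ × ℕ × ℕ × ℕ) :=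
  {(a, b, c, d, e, f) : ℕ × ℕ × ℕ × ℕ × ℕ × ℕ |
    2 * a + d + e = L1 ∧ 2 * b + d + f = L2 ∧ 2 * c + e + f = L3 ∧
    1 ≤ d + e ∧ 1 ≤ d + f ∧ 1 ≤ e + f}

/-!
An adjacency matrix in `S L1 L2 L3` is determined by its loop counts `(a, b, c)`: the
numbers of edges `d + e`, `d + f`, `e + f` leaving the three nodes are `L1 - 2a`,
`L2 - 2b`, `L3 - 2c`, and these determine `d, e, f`. Conversely a triple of loop counts
comes from a matrix exactly when `d, e, f` so recovered are natural numbers (triangle-type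
inequalities plus the parity of the degree sum) and the connectivity conditions
`2a < L1`, `2b < L2`, `2c < L3` hold. Hence counting matrices with `b ≤ c` amounts to
counting such triples with `b ≤ c`.
-/

def loopCounts (x : ℕ × ℕ × ℕ × ℕ × ℕ × ℕ) : ℕ × ℕ × ℕ := (x.1, x.2.1, x.2.2.1)

theorem injOn_loopCounts_S (L1 L2 L3 : ℕ) : Set.InjOn loopCounts (S L1 L2 L3) := by
  rintro ⟨a, b, c, d, e, f⟩ ⟨h1, h2, h3, -⟩ ⟨a', b', c', d', e', f'⟩ ⟨h1', h2', h3', -⟩ heq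
  simp only [loopCounts, Prod.mk.injEq] at heq ⊢
  omega

theorem loopCounts_image_S {L1 L2 L3 : ℕ} (heven : Even (L1 + L2 + L3)) :
    loopCounts '' S L1 L2 L3 =
      {t : ℕ × ℕ × ℕ |
        2 * t.1 + 1 ≤ L1 ∧ 2 * t.2.1 + 1 ≤ L2 ∧ 2 * t.2.2 + 1 ≤ L3 ∧
        L3 + 2 * t.1 + 2 * t.2.1 ≤ L1 + L2 + 2 * t.2.2 ∧
        L2 + 2 * t.1 + 2 * t.2.2 ≤ L1 + L3 + 2 * t.2.1 ∧
        L1 + 2 * t.2.1 + 2 * t.2.2 ≤ L2 + L3 + 2 * t.1} := by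
  obtain ⟨k, hk⟩ := heven
  ext ⟨a, b, c⟩
  simp only [Set.mem_image, Set.mem_ofPred_eq, Prod.exists, S, loopCounts, Prod.mk.injEq]
  constructor
  · rintro ⟨a, b, c, d, e, f, hS, rfl, rfl, rfl⟩
    omega
  · rintro ⟨ha, hb, hc, hd, he, hf⟩
    -- `k - a - b - c = d + e + f`, half the number of non-loop edge endpoints.
    exact ⟨a, b, c, k + c - a - b - L3, k + b - a - c - L2, k + a - b - c - L1,
      by omega, rfl, rfl, rfl⟩

theorem count_two_larger_degrees_equal (L1 Λ : ℕ) (heven : Even L1) :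
    {x ∈ S L1 Λ Λ | x.2.1 ≤ x.2.2.1}.ncard =
      {(a, b, c) : ℕ × ℕ × ℕ |
        2 * a + 1 ≤ L1 ∧ 2 * b + 1 ≤ Λ ∧ b ≤ c ∧ 2 * c + 1 ≤ Λ ∧
        2 * a + 2 * b ≤ L1 + 2 * c ∧ 2 * a + 2 * c ≤ L1 + 2 * b ∧
        L1 + 2 * b + 2 * c ≤ 2 * Λ + 2 * a}.ncard := by
  have hsum : Even (L1 + Λ + Λ) := by
    rw [add_assoc, ← two_mul]
    exact heven.add (even_two_mul Λ)
  have hsep : {x ∈ S L1 Λ Λ | x.2.1 ≤ x.2.2.1} =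
      S L1 Λ Λ ∩ loopCounts ⁻¹' {t | t.2.1 ≤ t.2.2} := rfl
  rw [hsep, ← ((injOn_loopCounts_S L1 Λ Λ).mono Set.inter_subset_left).ncard_image,
    Set.image_inter_preimage, loopCounts_image_S hsum]
  congr 1
  ext ⟨a, b, c⟩
  simp only [Set.mem_inter_iff, Set.mem_ofPred_eq]
  omega
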